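/- Let A ∈ ℝ^{n×n} be Hurwitz, B ∈ ℝ^{n×1}, C ∈ ℝ^{p×n}, and assume Bᵀ e^{Aᵀt} Cᵀ C e^{As} B ≥ 0 for all t, s ≥ 0. Then the minimum IOS-gain and the minimum output asymptotic gain of ẋ = Ax + Bu, y = Cx satisfy γ = γ_as = sup_{T>0} |∫₀^T C e^{As} B ds| = |C A^{−1} B|. -/

import Mathlib

open Filter MeasureTheory NormedSpace

noncomputable section

/-- Euclidean norm of a vector in `ℝ^k`. -/
def eNorm {k : ℕ} (v : Fin k → ℝ) : ℝ := Real.sqrt (∑ i, v i ^ 2)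

/-- Matrix norm induced by the Euclidean norms. -/
def matNorm {k l : ℕ} (M : Matrix (Fin k) (Fin l) ℝ) : ℝ :=
  sSup {r | ∃ x : Fin l → ℝ, eNorm x = 1 ∧ r = eNorm (M.mulVec x)}

/-- `A` is Hurwitz: every (complex) eigenvalue of `A` has negative real part. -/
def Hurwitz {n : ℕ} (A : Matrix (Fin n) (Fin n) ℝ) : Prop :=
  ∀ μ ∈ spectrum ℂ (A.map (Complex.ofReal)), μ.re < 0

/-- The matrix exponential `e^{tA}`. -/
def mexp {n : ℕ} (A : Matrix (Fin n) (Fin n) ℝ) (t : ℝ) : Matrix (Fin n) (Fin n) ℝ :=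
  exp (t • A)

/-!
The sign condition says that the impulse response `g s = C e^{sA} B` has pairwise nonnegative
inner products. For an input with `|u| ≤ 1`, write `y = ∫₀ᵗ u(σ) g(t-σ) dσ` and
`w = ∫₀ᵗ g(t-σ) dσ`: positivity gives `|⟪g σ, y⟫| ≤ ⟪g σ, w⟫` for every `σ`, and integrating once
more `‖y‖² ≤ ‖w‖²`, so no input beats the unit step. The same positivity makes
`T ↦ ‖∫₀ᵀ g‖` nondecreasing. Since `A` is Hurwitz, the eigenvalues of `e^A` lie in the open unit
disc, so `e^{tA} → 0` by Gelfand's formula and `∫₀ᵀ g → -C A⁻¹ B`. Hence all three suprema equal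
the limit `|C A⁻¹ B|` of the step response.
-/

open Topology
open scoped RealInnerProductSpace Matrix

/- The ℓ∞ operator norm makes square matrices a Banach algebra; it induces the product topology,
so `exp` (which only depends on the topology) is the one in `mexp`. -/
attribute [local instance] Matrix.linftyOpNormedRing Matrix.linftyOpNormedAlgebra

lemma csSup_eq_of_forall_le_of_tendsto {α ι : Type*} [ConditionallyCompleteLinearOrder α]
    [TopologicalSpace α] [OrderClosedTopology α] {l : Filter ι} [l.NeBot] {S : Set α} {L : α}
    {f : ι → α} (hS : ∀ r ∈ S, r ≤ L) (hfS : ∀ᶠ i in l, f i ∈ S) (hf : Tendsto f l (𝓝 L)) :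
    sSup S = L :=
  have ⟨i, hi⟩ := hfS.exists
  IsLUB.csSup_eq ⟨hS, fun _ hb => le_of_tendsto hf (hfS.mono fun _ hi => hb hi)⟩ ⟨f i, hi⟩

section InnerProductSpace

variable {E : Type*} [NormedAddCommGroup E] [InnerProductSpace ℝ E]

lemma norm_le_norm_add_of_inner_nonneg {x d : E} (h : 0 ≤ ⟪x, d⟫) : ‖x‖ ≤ ‖x + d‖ := by
  have : ‖x‖ ^ 2 ≤ ‖x + d‖ ^ 2 := by
    rw [norm_add_sq_real]
    nlinarith [sq_nonneg ‖d‖]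
  exact (pow_le_pow_iff_left₀ (norm_nonneg _) (norm_nonneg _) two_ne_zero).mp this

lemma tendsto_norm_step_response {g : ℝ → E} {F : E}
    (hF : Tendsto (fun T => ∫ s in (0 : ℝ)..T, g s) atTop (𝓝 F)) :
    Tendsto (fun t => ‖∫ s in (0 : ℝ)..t, (1 : ℝ) • g (t - s)‖) atTop (𝓝 ‖F‖) := by
  simpa using hF.norm

variable [CompleteSpace E]

section

variable {α : Type*} [MeasurableSpace α] {μ : Measure α} {u : α → ℝ} {h : α → E}

lemma abs_inner_integral_smul_le {v w : E} (hum : AEStronglyMeasurable u μ)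
    (hu : ∀ᵐ a ∂μ, |u a| ≤ 1) (hh : Integrable h μ) (hvw : ∀ᵐ a ∂μ, |⟪v, h a⟫| ≤ ⟪w, h a⟫) :
    |⟪v, ∫ a, u a • h a ∂μ⟫| ≤ ⟪w, ∫ a, h a ∂μ⟫ := by
  have huh : Integrable (fun a => u a • h a) μ := hh.bdd_smul 1 hum hu
  rw [← integral_inner huh, ← integral_inner hh, ← Real.norm_eq_abs]
  refine norm_integral_le_of_norm_le (hh.const_inner w) ?_
  filter_upwards [hu, hvw] with a hua hvwa
  rw [inner_smul_right, Real.norm_eq_abs, abs_mul]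
  exact (mul_le_of_le_one_left (abs_nonneg _) hua).trans hvwa

lemma norm_integral_smul_le_of_inner_nonneg (hum : AEStronglyMeasurable u μ)
    (hu : ∀ᵐ a ∂μ, |u a| ≤ 1) (hh : Integrable h μ)
    (hpos : ∀ᵐ a ∂μ, ∀ᵐ b ∂μ, 0 ≤ ⟪h a, h b⟫) :
    ‖∫ a, u a • h a ∂μ‖ ≤ ‖∫ a, h a ∂μ‖ := by
  set y := ∫ a, u a • h a ∂μ
  set w := ∫ a, h a ∂μ
  have hy : ∀ᵐ a ∂μ, |⟪y, h a⟫| ≤ ⟪w, h a⟫ := by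
    filter_upwards [hpos] with a ha
    rw [real_inner_comm (h a) y, real_inner_comm (h a) w]
    refine abs_inner_integral_smul_le hum hu hh ?_
    filter_upwards [ha] with b hb
    rw [abs_of_nonneg hb]
  have hyy := abs_inner_integral_smul_le hum hu hh hy
  rw [real_inner_self_eq_norm_sq, real_inner_self_eq_norm_sq, abs_of_nonneg (by positivity)]
    at hyy
  exact (pow_le_pow_iff_left₀ (norm_nonneg _) (norm_nonneg _) two_ne_zero).mp hyy

end

lemma inner_intervalIntegral (v : E) {f : ℝ → E} {a b : ℝ}
    (hf : IntervalIntegrable f volume a b) : ⟪v, ∫ x in a..b, f x⟫ = ∫ x in a..b, ⟪v, f x⟫ :=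
  ((innerSL ℝ v).intervalIntegral_comp_comm hf).symm

variable {g : ℝ → E}

lemma norm_intervalIntegral_le_of_le (hg : Continuous g)
    (hpos : ∀ s ≥ (0 : ℝ), ∀ τ ≥ (0 : ℝ), 0 ≤ ⟪g s, g τ⟫) {T₁ T₂ : ℝ} (h0 : 0 ≤ T₁)
    (h12 : T₁ ≤ T₂) : ‖∫ s in (0 : ℝ)..T₁, g s‖ ≤ ‖∫ s in (0 : ℝ)..T₂, g s‖ := by
  rw [← intervalIntegral.integral_add_adjacent_intervals (hg.intervalIntegrable 0 T₁)
    (hg.intervalIntegrable T₁ T₂)]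
  refine norm_le_norm_add_of_inner_nonneg ?_
  rw [inner_intervalIntegral _ (hg.intervalIntegrable _ _)]
  refine intervalIntegral.integral_nonneg h12 fun τ hτ => ?_
  rw [real_inner_comm, inner_intervalIntegral _ (hg.intervalIntegrable _ _)]
  exact intervalIntegral.integral_nonneg h0 fun s hs => hpos τ (h0.trans hτ.1) s hs.1

lemma norm_intervalIntegral_le_of_tendsto (hg : Continuous g)
    (hpos : ∀ s ≥ (0 : ℝ), ∀ τ ≥ (0 : ℝ), 0 ≤ ⟪g s, g τ⟫) {F : E}
    (hF : Tendsto (fun T => ∫ s in (0 : ℝ)..T, g s) atTop (𝓝 F)) {T : ℝ} (hT : 0 ≤ T) :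
    ‖∫ s in (0 : ℝ)..T, g s‖ ≤ ‖F‖ :=
  ge_of_tendsto hF.norm <| (eventually_ge_atTop T).mono fun _ hT' =>
    norm_intervalIntegral_le_of_le hg hpos hT hT'

lemma norm_intervalIntegral_smul_comp_sub_le (hg : Continuous g)
    (hpos : ∀ s ≥ (0 : ℝ), ∀ τ ≥ (0 : ℝ), 0 ≤ ⟪g s, g τ⟫) {t : ℝ} (ht : 0 ≤ t) {u : ℝ → ℝ}
    (hum : AEStronglyMeasurable u (volume.restrict (Set.Ioc 0 t)))
    (hu : ∀ᵐ s ∂(volume.restrict (Set.Ioc 0 t)), |u s| ≤ 1) :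
    ‖∫ s in (0 : ℝ)..t, u s • g (t - s)‖ ≤ ‖∫ s in (0 : ℝ)..t, g s‖ := by
  have hflip : ∫ s in (0 : ℝ)..t, g s = ∫ s in Set.Ioc 0 t, g (t - s) := by
    rw [← intervalIntegral.integral_of_le ht]
    simp
  rw [intervalIntegral.integral_of_le ht, hflip]
  refine norm_integral_smul_le_of_inner_nonneg hum hu
    (hg.comp (continuous_const.sub continuous_id)).integrableOn_Ioc ?_
  have hmem := ae_restrict_mem (μ := volume) (measurableSet_Ioc (a := (0 : ℝ)) (b := t))
  filter_upwards [hmem] with s hs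
  filter_upwards [hmem] with τ hτ
  exact hpos _ (by linarith [hs.2]) _ (by linarith [hτ.2])

lemma norm_response_le_of_tendsto (hg : Continuous g)
    (hpos : ∀ s ≥ (0 : ℝ), ∀ τ ≥ (0 : ℝ), 0 ≤ ⟪g s, g τ⟫) {F : E}
    (hF : Tendsto (fun T => ∫ s in (0 : ℝ)..T, g s) atTop (𝓝 F)) {u : ℝ → ℝ} (hum : Measurable u)
    (hu : ∀ᵐ s ∂(volume.restrict (Set.Ici (0 : ℝ))), |u s| ≤ 1) {t : ℝ} (ht : 0 ≤ t) :
    ‖∫ s in (0 : ℝ)..t, u s • g (t - s)‖ ≤ ‖F‖ :=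
  have hu' := ae_restrict_of_ae_restrict_of_subset
    (Set.Ioc_subset_Ioi_self.trans Set.Ioi_subset_Ici_self) hu
  (norm_intervalIntegral_smul_comp_sub_le hg hpos ht hum.aestronglyMeasurable hu').trans
    (norm_intervalIntegral_le_of_tendsto hg hpos hF ht)

lemma sSup_norm_response_eq (hg : Continuous g)
    (hpos : ∀ s ≥ (0 : ℝ), ∀ τ ≥ (0 : ℝ), 0 ≤ ⟪g s, g τ⟫) {F : E}
    (hF : Tendsto (fun T => ∫ s in (0 : ℝ)..T, g s) atTop (𝓝 F)) :
    sSup {r | ∃ t ≥ (0 : ℝ), ∃ u : ℝ → ℝ, Measurable u ∧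
      (∀ᵐ s ∂(volume.restrict (Set.Ici (0 : ℝ))), |u s| ≤ 1) ∧
      r = ‖∫ s in (0 : ℝ)..t, u s • g (t - s)‖} = ‖F‖ := by
  refine csSup_eq_of_forall_le_of_tendsto ?_ ?_ (tendsto_norm_step_response hF)
  · rintro _ ⟨t, ht, u, hum, hu, rfl⟩
    exact norm_response_le_of_tendsto hg hpos hF hum hu ht
  · filter_upwards [eventually_ge_atTop 0] with t ht
    exact ⟨t, ht, fun _ => 1, measurable_const, by simp, rfl⟩

lemma sSup_limsup_norm_response_eq (hg : Continuous g)
    (hpos : ∀ s ≥ (0 : ℝ), ∀ τ ≥ (0 : ℝ), 0 ≤ ⟪g s, g τ⟫) {F : E}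
    (hF : Tendsto (fun T => ∫ s in (0 : ℝ)..T, g s) atTop (𝓝 F)) :
    sSup {r | ∃ u : ℝ → ℝ, Measurable u ∧
      (∀ᵐ s ∂(volume.restrict (Set.Ici (0 : ℝ))), |u s| ≤ 1) ∧
      r = limsup (fun t => ‖∫ s in (0 : ℝ)..t, u s • g (t - s)‖) atTop} = ‖F‖ := by
  refine IsGreatest.csSup_eq ⟨⟨fun _ => 1, measurable_const, by simp,
    (tendsto_norm_step_response hF).limsup_eq.symm⟩, ?_⟩
  rintro _ ⟨u, hum, hu, rfl⟩
  exact limsup_le_of_le (isCoboundedUnder_le_of_le atTop fun _ => norm_nonneg _)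
    ((eventually_ge_atTop 0).mono fun t ht => norm_response_le_of_tendsto hg hpos hF hum hu ht)

lemma sSup_norm_intervalIntegral_eq (hg : Continuous g)
    (hpos : ∀ s ≥ (0 : ℝ), ∀ τ ≥ (0 : ℝ), 0 ≤ ⟪g s, g τ⟫) {F : E}
    (hF : Tendsto (fun T => ∫ s in (0 : ℝ)..T, g s) atTop (𝓝 F)) :
    sSup {r | ∃ T > (0 : ℝ), r = ‖∫ s in (0 : ℝ)..T, g s‖} = ‖F‖ :=
  csSup_eq_of_forall_le_of_tendsto
    (by rintro _ ⟨T, hT, rfl⟩; exact norm_intervalIntegral_le_of_tendsto hg hpos hF hT.le)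
    ((eventually_gt_atTop 0).mono fun T hT => ⟨T, hT, rfl⟩) hF.norm

end InnerProductSpace

section BanachAlgebra

variable {𝔸 : Type*} [NormedRing 𝔸] [CompleteSpace 𝔸]

lemma tendsto_pow_nhds_zero_of_forall_norm_lt_one [NormedAlgebra ℂ 𝔸] {a : 𝔸}
    (ha : ∀ z ∈ spectrum ℂ a, ‖z‖ < 1) : Tendsto (a ^ ·) atTop (𝓝 0) := by
  nontriviality 𝔸
  obtain ⟨r, hρr, hr1⟩ := ENNReal.lt_iff_exists_nnreal_btwn.mp
    (spectrum.spectralRadius_lt_of_forall_lt a (r := 1) fun z hz => by exact_mod_cast ha z hz)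
  have hr1 : (r : ℝ) < 1 := by exact_mod_cast hr1
  have hev : ∀ᶠ k : ℕ in atTop, ‖a ^ k‖ ≤ (r : ℝ) ^ k := by
    filter_upwards [(spectrum.pow_norm_pow_one_div_tendsto_nhds_spectralRadius a).eventually
      (gt_mem_nhds hρr), eventually_ge_atTop 1] with k hk hk1
    rw [ENNReal.ofReal_lt_coe_iff (by positivity), one_div,
      Real.rpow_inv_lt_iff_of_pos (norm_nonneg _) r.coe_nonneg (by positivity),
      Real.rpow_natCast] at hk
    exact hk.le
  exact squeeze_zero_norm' hev (tendsto_pow_atTop_nhds_zero_of_lt_one r.coe_nonneg hr1)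

lemma tendsto_exp_smul_nhds_zero_of_tendsto_pow [NormedAlgebra ℝ 𝔸] {a : 𝔸}
    (ha : Tendsto (exp a ^ ·) atTop (𝓝 0)) : Tendsto (fun t : ℝ => exp (t • a)) atTop (𝓝 0) := by
  let : NormedAlgebra ℚ 𝔸 := NormedAlgebra.restrictScalars ℚ ℝ 𝔸
  have hcont : Continuous fun s : ℝ => exp (s • a) := by fun_prop
  obtain ⟨K, hK⟩ := (isCompact_Icc (a := (0 : ℝ)) (b := 1)).exists_bound_of_continuousOn
    hcont.continuousOn
  have hsplit : ∀ t : ℝ, exp (t • a) = exp a ^ ⌊t⌋₊ * exp ((t - ⌊t⌋₊) • a) := fun t => by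
    rw [← exp_nsmul, ← Nat.cast_smul_eq_nsmul ℝ, ← exp_add_of_commute
      (((Commute.refl a).smul_left _).smul_right _), ← add_smul, add_sub_cancel]
  have hev : ∀ᶠ t : ℝ in atTop, ‖exp (t • a)‖ ≤ ‖exp a ^ ⌊t⌋₊‖ * K := by
    filter_upwards [eventually_ge_atTop 0] with t ht
    rw [hsplit]
    refine (norm_mul_le _ _).trans (mul_le_mul_of_nonneg_left (hK _ ⟨?_, ?_⟩) (norm_nonneg _))
    · linarith [Nat.floor_le ht]
    · linarith [Nat.lt_floor_add_one t]
  refine squeeze_zero_norm' hev ?_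
  simpa using (ha.comp tendsto_nat_floor_atTop).norm.mul_const K

end BanachAlgebra

namespace Matrix

variable {m : Type*} [Fintype m] [DecidableEq m]

lemma exp_mulVec_of_mulVec_eq_smul {A : Matrix m m ℂ} {μ : ℂ} {v : m → ℂ}
    (hv : A *ᵥ v = μ • v) : exp A *ᵥ v = Complex.exp μ • v := by
  have hX : SemiconjBy (replicateCol m v) (algebraMap ℂ (Matrix m m ℂ) μ) A := by
    rw [SemiconjBy, Algebra.algebraMap_eq_smul_one, mul_smul_comm, mul_one, ← replicateCol_mulVec,
      hv, replicateCol_smul]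
  have hexp := hX.exp_right
  rw [← algebraMap_exp_comm, SemiconjBy, Algebra.algebraMap_eq_smul_one, mul_smul_comm, mul_one,
    ← replicateCol_mulVec, ← replicateCol_smul, ← Complex.exp_eq_exp_ℂ] at hexp
  funext i
  exact (congrFun (congrFun hexp i) i).symm

/- `exp A` lies in the closed subalgebra generated by `A`, so `exp A = q(A)` for a polynomial `q`;
on an eigenvector for `μ`, `q(A)` acts as `q(μ)` and `exp A` as `e^μ`. -/
lemma spectrum_exp_subset (A : Matrix m m ℂ) :
    spectrum ℂ (exp A) ⊆ Complex.exp '' spectrum ℂ A := by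
  nontriviality Matrix m m ℂ
  have hadj : exp A ∈ Algebra.adjoin ℂ {A} :=
    exp_mem (R := ℂ) (s := Algebra.adjoin ℂ {A})
      (Subalgebra.toSubmodule (Algebra.adjoin ℂ {A})).closed_of_finiteDimensional
      (Algebra.self_mem_adjoin_singleton ℂ A)
  rw [Algebra.adjoin_singleton_eq_range_aeval] at hadj
  obtain ⟨q, hq : Polynomial.aeval A q = exp A⟩ := hadj
  rw [← hq, spectrum.map_polynomial_aeval]
  rintro _ ⟨μ, hμ, rfl⟩
  refine ⟨μ, hμ, ?_⟩
  rw [← spectrum_toLin', ← Module.End.hasEigenvalue_iff_mem_spectrum] at hμ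
  obtain ⟨v, hv⟩ := hμ.exists_hasEigenvector
  have hqv := Module.End.aeval_apply_of_hasEigenvector (p := q) hv
  have hqA : Polynomial.aeval (toLin' A) q = toLin' (exp A) := by
    rw [← hq]
    exact Polynomial.aeval_algHom_apply (toLinAlgEquiv' (R := ℂ) (n := m)) A q
  rw [hqA, toLin'_apply, exp_mulVec_of_mulVec_eq_smul hv.apply_eq_smul] at hqv
  exact smul_left_injective ℂ hv.2 hqv

end Matrix

lemma continuous_mexp {n : ℕ} (A : Matrix (Fin n) (Fin n) ℝ) : Continuous (mexp A) := by
  unfold mexp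
  fun_prop

namespace Hurwitz

variable {n : ℕ} {A : Matrix (Fin n) (Fin n) ℝ}

lemma isUnit_det (hA : Hurwitz A) : IsUnit A.det := by
  have h0 : (0 : ℂ) ∉ spectrum ℂ (A.map Complex.ofReal) := fun h => by simpa using hA 0 h
  rw [spectrum.zero_notMem_iff, Matrix.isUnit_iff_isUnit_det,
    show A.map Complex.ofReal = Complex.ofRealHom.mapMatrix A from rfl, ← RingHom.map_det] at h0
  rw [isUnit_iff_ne_zero] at h0 ⊢
  simpa using h0

lemma tendsto_mexp_atTop (hA : Hurwitz A) : Tendsto (mexp A) atTop (𝓝 0) := by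
  set φ := (Complex.ofRealAm.mapMatrix : Matrix (Fin n) (Fin n) ℝ →ₐ[ℝ] _)
  have hφ : ∀ M, (φ M).map Complex.re = M := fun M => by ext; simp [φ]
  have hpowℂ : Tendsto (exp (φ A) ^ ·) atTop (𝓝 0) := by
    refine tendsto_pow_nhds_zero_of_forall_norm_lt_one fun z hz => ?_
    obtain ⟨μ, hμ, rfl⟩ := Matrix.spectrum_exp_subset _ hz
    simpa [Complex.norm_exp] using hA μ hμ
  have hpow : Tendsto (exp A ^ ·) atTop (𝓝 0) := by
    have hre : Continuous fun M : Matrix (Fin n) (Fin n) ℂ => M.map Complex.re :=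
      continuous_id.matrix_map Complex.continuous_re
    convert (hre.tendsto 0).comp hpowℂ using 2 with k
    · have hexp : φ (exp A) = exp (φ A) :=
        map_exp φ (continuous_id.matrix_map Complex.continuous_ofReal) A
      rw [Function.comp_apply, ← hexp, ← map_pow, hφ]
    · ext
      simp
  exact tendsto_exp_smul_nhds_zero_of_tendsto_pow hpow

lemma tendsto_integral_mexp (hA : Hurwitz A) :
    Tendsto (fun T => ∫ s in (0 : ℝ)..T, mexp A s) atTop (𝓝 (-A⁻¹)) := by
  have hderiv : ∀ s, HasDerivAt (fun τ => A⁻¹ * mexp A τ) (mexp A s) s := fun s => by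
    have := (hasDerivAt_exp_smul_const' A s).const_mul A⁻¹
    rwa [← mul_assoc, Matrix.nonsing_inv_mul A hA.isUnit_det, one_mul] at this
  have hFTC : ∀ T, ∫ s in (0 : ℝ)..T, mexp A s = A⁻¹ * mexp A T - A⁻¹ := fun T => by
    rw [intervalIntegral.integral_eq_sub_of_hasDerivAt (fun s _ => hderiv s)
      ((continuous_mexp A).intervalIntegrable _ _)]
    simp [mexp]
  simp_rw [hFTC]
  simpa using (hA.tendsto_mexp_atTop.const_mul A⁻¹).sub_const A⁻¹

lemma tendsto_integral_impulse_response {p : ℕ} (hA : Hurwitz A) (B : Fin n → ℝ)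
    (C : Matrix (Fin p) (Fin n) ℝ) :
    Tendsto (fun T => ∫ s in (0 : ℝ)..T, C *ᵥ (mexp A s *ᵥ B)) atTop
      (𝓝 (-(C *ᵥ (A⁻¹ *ᵥ B)))) := by
  let Φ : Matrix (Fin n) (Fin n) ℝ →L[ℝ] (Fin p → ℝ) :=
    LinearMap.toContinuousLinearMap (C.mulVecLin ∘ₗ (Matrix.mulVecBilin ℝ ℝ).flip B)
  have hΦ : ∀ T, ∫ s in (0 : ℝ)..T, C *ᵥ (mexp A s *ᵥ B) = Φ (∫ s in (0 : ℝ)..T, mexp A s) :=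
    fun T => Φ.intervalIntegral_comp_comm ((continuous_mexp A).intervalIntegrable _ _)
  simp_rw [hΦ]
  have hlim := (Φ.continuous.tendsto _).comp hA.tendsto_integral_mexp
  rw [map_neg] at hlim
  exact hlim

end Hurwitz

lemma eNorm_eq_norm_toLp {k : ℕ} (v : Fin k → ℝ) : eNorm v = ‖WithLp.toLp 2 v‖ := by
  simp [eNorm, EuclideanSpace.norm_eq]

lemma dotProduct_eq_inner_toLp {k : ℕ} (v w : Fin k → ℝ) :
    v ⬝ᵥ w = ⟪WithLp.toLp 2 v, WithLp.toLp 2 w⟫ := by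
  simp [EuclideanSpace.inner_eq_star_dotProduct, dotProduct_comm]

lemma toLp_intervalIntegral {ι : Type*} [Fintype ι] (f : ℝ → ι → ℝ) (a b : ℝ) :
    WithLp.toLp 2 (∫ x in a..b, f x) = ∫ x in a..b, WithLp.toLp 2 (f x) := by
  simp_rw [intervalIntegral, WithLp.toLp_sub]
  congr 1 <;> exact ((EuclideanSpace.equiv ι ℝ).symm.integral_comp_comm _).symm

/-- Section 5.2, formulas (5.10)–(5.11): for a single-input system with Hurwitz `A`
satisfying the sign condition `Bᵀe^{Aᵀt}CᵀCe^{As}B ≥ 0`, the minimum IOS-gain and the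
minimum output asymptotic gain satisfy
`γ = γ_as = sup_{T>0}|∫₀^T C e^{As} B ds| = |C A^{−1} B|`. -/
theorem statement_13 {n p : ℕ}
    (A : Matrix (Fin n) (Fin n) ℝ) (B : Fin n → ℝ) (C : Matrix (Fin p) (Fin n) ℝ)
    (hA : Hurwitz A)
    (hsign : ∀ t ≥ (0 : ℝ), ∀ s ≥ (0 : ℝ),
      0 ≤ dotProduct (C.mulVec ((mexp A t).mulVec B))
            (C.mulVec ((mexp A s).mulVec B)))
    (y : (ℝ → ℝ) → ℝ → Fin p → ℝ)
    (hy : y = fun u t => ∫ s in (0 : ℝ)..t, u s • C.mulVec ((mexp A (t - s)).mulVec B))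
    (γ γas : ℝ)
    (hγ : γ = sSup {r | ∃ t ≥ (0 : ℝ), ∃ u : ℝ → ℝ, Measurable u ∧
      (∀ᵐ s ∂(volume.restrict (Set.Ici (0 : ℝ))), |u s| ≤ 1) ∧ r = eNorm (y u t)})
    (hγas : γas = sSup {r | ∃ u : ℝ → ℝ, Measurable u ∧
      (∀ᵐ s ∂(volume.restrict (Set.Ici (0 : ℝ))), |u s| ≤ 1) ∧
      r = limsup (fun t => eNorm (y u t)) atTop}) :
    γ = γas ∧
    γas = sSup {r | ∃ T > (0 : ℝ),
      r = eNorm (∫ s in (0 : ℝ)..T, C.mulVec ((mexp A s).mulVec B))} ∧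
    sSup {r | ∃ T > (0 : ℝ),
      r = eNorm (∫ s in (0 : ℝ)..T, C.mulVec ((mexp A s).mulVec B))} =
      eNorm (C.mulVec (A⁻¹.mulVec B)) := by
  subst hy hγ hγas
  have hg : Continuous fun s => WithLp.toLp 2 (C *ᵥ (mexp A s *ᵥ B)) :=
    (PiLp.continuous_toLp 2 _).comp
      (continuous_const.matrix_mulVec ((continuous_mexp A).matrix_mulVec continuous_const))
  have hpos : ∀ s ≥ (0 : ℝ), ∀ τ ≥ (0 : ℝ), 0 ≤ ⟪WithLp.toLp 2 (C *ᵥ (mexp A s *ᵥ B)),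
      WithLp.toLp 2 (C *ᵥ (mexp A τ *ᵥ B))⟫ := by
    simpa only [dotProduct_eq_inner_toLp] using hsign
  have hF := ((PiLp.continuous_toLp 2 _).tendsto _).comp
    (hA.tendsto_integral_impulse_response B C)
  simp only [Function.comp_def, toLp_intervalIntegral, WithLp.toLp_neg] at hF
  have h₁ := sSup_norm_response_eq hg hpos hF
  have h₂ := sSup_limsup_norm_response_eq hg hpos hF
  have h₃ := sSup_norm_intervalIntegral_eq hg hpos hF
  rw [norm_neg] at h₁ h₂ h₃
  simp only [eNorm_eq_norm_toLp, toLp_intervalIntegral, WithLp.toLp_smul]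
  exact ⟨h₁.trans h₂.symm, h₂.trans h₃.symm, h₃⟩
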